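/- For every OOEBP instance I with all item sizes in (0,1) (no 1-items), the algorithm NF2 uses at most (3/2)·OPT(I) + 2 bins. That is, NF2 has asymptotic competitive ratio at most 3/2 for inputs without 1-items. -/
import Mathlib


open scoped BigOperators Classical

namespace OOEBP

noncomputable section

/-- Load of bin `b` under packing `p` of instance `s`. -/
def binLoad (s : List ℝ) (p : ℕ → ℕ) (b : ℕ) : ℝ :=
  ∑ j ∈ Finset.range s.length, if p j = b then s.getD j 0 else 0

/-- A packing is feasible if each item is placed into a bin whose current
load (total size of earlier items in the same bin) is strictly below 1. -/
def Feasible (s : List ℝ) (p : ℕ → ℕ) : Prop :=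
  ∀ i < s.length,
    (∑ j ∈ Finset.range i, if p j = p i then s.getD j 0 else 0) < 1

/-- The cost of a packing: the number of nonempty bins. -/
def cost (s : List ℝ) (p : ℕ → ℕ) : ℕ :=
  ((Finset.range s.length).image p).card

/-- Optimal cost of a feasible packing of `s`. -/
def OPT (s : List ℝ) : ℕ :=
  sInf {m | ∃ p, Feasible s p ∧ cost s p = m}

/-- Item `i` is the exceeding item of its bin: the bin's total size is at
least 1 and `i` is the item of maximum index in its bin. -/
def IsExceeding (s : List ℝ) (p : ℕ → ℕ) (i : ℕ) : Prop :=
  i < s.length ∧ 1 ≤ binLoad s p (p i) ∧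
    ∀ j, i < j → j < s.length → p j ≠ p i

/-- One step of Next Fit: the state is (index of the open bin, its load). -/
def nfStep : ℕ × ℝ → ℝ → ℕ × ℝ :=
  fun st x => if st.2 < 1 then (st.1, st.2 + x) else (st.1 + 1, x)

/-- The number of bins used by Next Fit. -/
def nfCost (s : List ℝ) : ℕ :=
  if s.isEmpty then 0 else (s.foldl nfStep (0, 0)).1 + 1

/-- The number of bins used by NF2: Next Fit applied separately to the items
of sizes in (0,1/2) and to the items of sizes in [1/2,1). -/
def nf2Cost (s : List ℝ) : ℕ :=
  nfCost (s.filter (fun x => decide (x < 1 / 2))) +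
  nfCost (s.filter (fun x => decide (¬ x < 1 / 2)))

/-! ### Auxiliary lemmas -/

/-- Next Fit invariant: the final bin index plus final load is bounded by the
initial index plus initial load plus the total size. -/
lemma nf_inv_sum (s : List ℝ) (hs : ∀ x ∈ s, 0 < x) :
    ∀ (k : ℕ) (l : ℝ), 0 ≤ l →
      ((s.foldl nfStep (k, l)).1 : ℝ) + (s.foldl nfStep (k, l)).2 ≤ k + l + s.sum ∧
      0 ≤ (s.foldl nfStep (k, l)).2 := by
  induction s with
  | nil => intro k l hl; simp [hl]
  | cons x t ih =>
    intro k l hl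
    have hx : 0 < x := hs x (by simp)
    have hst : ∀ y ∈ t, 0 < y := fun y hy => hs y (by simp [hy])
    by_cases h : l < 1
    · have := (ih hst) k (l + x) (by linarith)
      simp only [List.foldl_cons, nfStep, h, if_true, List.sum_cons]
      constructor
      · calc _ ≤ (k : ℝ) + (l + x) + t.sum := this.1
          _ = k + l + (x + t.sum) := by ring
      · exact this.2
    · have := (ih hst) (k + 1) x (le_of_lt hx)
      simp only [List.foldl_cons, nfStep, h, if_false, List.sum_cons]
      constructor
      · calc _ ≤ ((k + 1 : ℕ) : ℝ) + x + t.sum := this.1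
          _ ≤ k + l + (x + t.sum) := by push_cast; linarith [not_lt.mp h]
      · exact this.2

/-- Next Fit uses at most `sum + 1` bins when all items are positive. -/
lemma nfCost_le_sum (s : List ℝ) (hs : ∀ x ∈ s, 0 < x) :
    (nfCost s : ℝ) ≤ s.sum + 1 := by
  unfold nfCost
  by_cases h : s.isEmpty
  · have : s.sum = 0 := by
      rcases List.isEmpty_iff.mp h with rfl; simp
    simp [h, this]
  · simp only [h, if_false]
    have h2 := nf_inv_sum s hs 0 0 le_rfl
    push_cast
    have := h2.1
    have := h2.2
    simp only [Nat.cast_zero] at *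
    linarith

/-- Next Fit invariant for counting: every closed bin contains at least two
items (since all items are `< 1`). -/
lemma nf_inv_count (s : List ℝ) (hs : ∀ x ∈ s, x < 1) :
    ∀ (k c : ℕ) (l : ℝ), (l < c ∨ (c = 0 ∧ l = 0)) →
      ∃ c' : ℕ, 2 * (s.foldl nfStep (k, l)).1 + c' ≤ 2 * k + c + s.length := by
  induction s with
  | nil => intro k c l _; exact ⟨c, by simp⟩
  | cons x t ih =>
    intro k c l hc
    have hx : x < 1 := hs x (by simp)
    have hst : ∀ y ∈ t, y < 1 := fun y hy => hs y (by simp [hy])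
    by_cases h : l < 1
    · obtain ⟨c', hc'⟩ := ih hst k (c + 1) (l + x) (Or.inl (by
        rcases hc with h1 | ⟨rfl, rfl⟩
        · push_cast; linarith
        · push_cast; linarith))
      refine ⟨c', ?_⟩
      simp only [List.foldl_cons, nfStep, h, if_true, List.length_cons]
      omega
    · have h1 : (1 : ℝ) ≤ l := not_lt.mp h
      have hcge : 2 ≤ c := by
        rcases hc with h2 | ⟨rfl, rfl⟩
        · by_contra hcon
          interval_cases c <;> simp_all <;> linarith
        · linarith
      obtain ⟨c', hc'⟩ := ih hst (k + 1) 1 x (Or.inl (by push_cast; linarith))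
      refine ⟨c', ?_⟩
      simp only [List.foldl_cons, nfStep, h, if_false, List.length_cons]
      omega

/-- Next Fit uses at most `length/2 + 1` bins when all items are `< 1`. -/
lemma nfCost_le_half_length (s : List ℝ) (hs : ∀ x ∈ s, x < 1) :
    2 * nfCost s ≤ s.length + 2 := by
  unfold nfCost
  by_cases h : s.isEmpty
  · simp [h]
  · rw [if_neg h]
    obtain ⟨c', hc'⟩ := nf_inv_count s hs 0 0 0 (Or.inr ⟨rfl, rfl⟩)
    omega

/-- The weight function: a small item weighs its size, a big item weighs 1/2. -/
def wt (x : ℝ) : ℝ := if x < 1 / 2 then x else 1 / 2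

lemma wt_le_half (x : ℝ) : wt x ≤ 1 / 2 := by
  unfold wt; split <;> linarith

lemma wt_le_size (x : ℝ) : wt x ≤ x := by
  unfold wt; split
  · exact le_rfl
  · next h => exact not_lt.mp h

lemma identity_feasible (s : List ℝ) : Feasible s id := by
  intro i hi
  have : ∀ j ∈ Finset.range i, (if id j = id i then s.getD j 0 else 0) = 0 := by
    intro j hj
    rw [if_neg]
    simp only [id]
    exact Nat.ne_of_lt (Finset.mem_range.mp hj)
  rw [Finset.sum_eq_zero this]; norm_num

lemma opt_exists (s : List ℝ) : ∃ p, Feasible s p ∧ cost s p = OPT s := by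
  have hne : {m | ∃ p, Feasible s p ∧ cost s p = m}.Nonempty :=
    ⟨cost s id, id, identity_feasible s, rfl⟩
  exact Nat.sInf_mem hne

/-- Key lower bound: the total weight of any instance is at most `3/2` times
the cost of any feasible packing, since each bin carries weight at most `3/2`. -/
lemma weight_le_cost (s : List ℝ) (hs : ∀ x ∈ s, 0 < x ∧ x < 1)
    (p : ℕ → ℕ) (hp : Feasible s p) :
    (∑ j ∈ Finset.range s.length, wt (s.getD j 0)) ≤ 3 / 2 * cost s p := by
  set n := s.length with hn
  have hmaps : ∀ j ∈ Finset.range n, p j ∈ (Finset.range n).image p :=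
    fun j hj => Finset.mem_image_of_mem p hj
  rw [← Finset.sum_fiberwise_of_maps_to hmaps]
  have hbin : ∀ b ∈ (Finset.range n).image p,
      (∑ j ∈ (Finset.range n).filter (fun j => p j = b), wt (s.getD j 0)) ≤ 3 / 2 := by
    intro b hb
    set F := (Finset.range n).filter (fun j => p j = b) with hF
    have hFne : F.Nonempty := by
      obtain ⟨i, hi, rfl⟩ := Finset.mem_image.mp hb
      exact ⟨i, Finset.mem_filter.mpr ⟨hi, rfl⟩⟩
    set u := F.max' hFne with hu
    have huF : u ∈ F := F.max'_mem hFne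
    have huR := Finset.mem_filter.mp huF
    have hun : u < n := Finset.mem_range.mp huR.1
    have hpu : p u = b := huR.2
    rw [← Finset.sum_erase_add F _ huF]
    have hpos : ∀ j, j < n → 0 < s.getD j 0 := by
      intro j hj
      rw [List.getD_eq_getElem _ _ hj]
      exact (hs _ (List.getElem_mem hj)).1
    have hsub : F.erase u ⊆ (Finset.range u).filter (fun j => p j = p u) := by
      intro j hj
      obtain ⟨hju, hjF⟩ := Finset.mem_erase.mp hj
      obtain ⟨hjR, hjb⟩ := Finset.mem_filter.mp hjF
      refine Finset.mem_filter.mpr ⟨Finset.mem_range.mpr ?_, by rw [hjb, hpu]⟩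
      exact lt_of_le_of_ne (F.le_max' j hjF) hju
    have h1 : (∑ j ∈ F.erase u, wt (s.getD j 0)) ≤
        ∑ j ∈ (Finset.range u).filter (fun j => p j = p u), s.getD j 0 := by
      calc (∑ j ∈ F.erase u, wt (s.getD j 0)) ≤ ∑ j ∈ F.erase u, s.getD j 0 :=
            Finset.sum_le_sum (fun j _ => wt_le_size _)
        _ ≤ _ := by
            apply Finset.sum_le_sum_of_subset_of_nonneg hsub
            intro j hj _
            have hjn : j < n := lt_trans (Finset.mem_range.mp (Finset.mem_filter.mp hj).1) hun
            exact le_of_lt (hpos j hjn)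
    have h2 : (∑ j ∈ (Finset.range u).filter (fun j => p j = p u), s.getD j 0) < 1 := by
      have := hp u hun
      rwa [Finset.sum_filter]
    have h3 := wt_le_half (s.getD u 0)
    linarith
  calc _ ≤ ∑ _b ∈ (Finset.range n).image p, (3/2 : ℝ) := Finset.sum_le_sum hbin
    _ = 3 / 2 * cost s p := by rw [Finset.sum_const, cost]; push_cast; ring

lemma sum_wt_range (s : List ℝ) :
    (∑ j ∈ Finset.range s.length, wt (s.getD j 0)) = (s.map wt).sum := by
  induction s with
  | nil => simp
  | cons a t ih =>
    rw [List.length_cons, Finset.sum_range_succ']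
    simp only [List.getD_cons_succ, List.getD_cons_zero, List.map_cons, List.sum_cons]
    rw [ih]; ring

lemma map_filter_split_gen (f : ℝ → ℝ) (q : ℝ → Bool) (s : List ℝ) :
    ((s.filter q).map f).sum + ((s.filter (fun x => !q x)).map f).sum = (s.map f).sum := by
  induction s with
  | nil => simp
  | cons a t ih =>
    cases hq : q a <;>
      rw [List.filter_cons, List.filter_cons, hq] <;>
      simp only [Bool.not_true, Bool.not_false, Bool.false_eq_true, if_true, if_false,
        List.map_cons, List.sum_cons] <;> rw [← ih] <;> ring

lemma map_filter_split (s : List ℝ) :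
    ((s.filter (fun x => decide (x < 1 / 2))).map wt).sum +
    ((s.filter (fun x => decide (¬ x < 1 / 2))).map wt).sum = (s.map wt).sum := by
  have hq : (fun x : ℝ => decide (¬ x < 1 / 2)) = fun x => !(decide (x < 1 / 2)) := by
    funext x; rw [decide_not]
  rw [hq]
  exact map_filter_split_gen wt (fun x => decide (x < 1 / 2)) s

lemma small_map_wt (s : List ℝ) :
    ((s.filter (fun x => decide (x < 1 / 2))).map wt).sum =
    (s.filter (fun x => decide (x < 1 / 2))).sum := by
  have h : ∀ x ∈ s.filter (fun x => decide (x < 1 / 2)), wt x = x := by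
    intro x hx
    have := List.of_mem_filter hx
    simp only [decide_eq_true_eq] at this
    rw [wt, if_pos this]
  rw [List.map_congr_left h, List.map_id']

lemma big_map_wt (s : List ℝ) :
    ((s.filter (fun x => decide (¬ x < 1 / 2))).map wt).sum =
    ((s.filter (fun x => decide (¬ x < 1 / 2))).length : ℝ) * (1 / 2) := by
  have h : ∀ x ∈ s.filter (fun x => decide (¬ x < 1 / 2)), wt x = (fun _ : ℝ => (1/2 : ℝ)) x := by
    intro x hx
    have := List.of_mem_filter hx
    simp only [decide_eq_true_eq] at this
    rw [wt, if_neg this]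
  rw [List.map_congr_left h]
  generalize (s.filter (fun x => decide (¬ x < 1 / 2))) = l
  induction l with
  | nil => simp
  | cons a t ih => simp only [List.map_cons, List.sum_cons, List.length_cons, ih]; push_cast; ring

/-- on inputs without 1-items, NF2 uses at most
`(3/2)·OPT(I) + 2` bins. -/
theorem stmt6 (s : List ℝ) (hs : ∀ x ∈ s, 0 < x ∧ x < 1) :
    (nf2Cost s : ℝ) ≤ 3 / 2 * OPT s + 2 := by
  obtain ⟨p, hp, hc⟩ := opt_exists s
  set L := s.filter (fun x => decide (x < 1 / 2)) with hL
  set B := s.filter (fun x => decide (¬ x < 1 / 2)) with hB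
  have hLpos : ∀ x ∈ L, 0 < x := fun x hx => (hs x (List.mem_of_mem_filter hx)).1
  have hBlt : ∀ x ∈ B, x < 1 := fun x hx => (hs x (List.mem_of_mem_filter hx)).2
  have h1 : (nfCost L : ℝ) ≤ L.sum + 1 := nfCost_le_sum L hLpos
  have h2 : 2 * nfCost B ≤ B.length + 2 := nfCost_le_half_length B hBlt
  have h2' : (nfCost B : ℝ) ≤ (B.length : ℝ) / 2 + 1 := by
    have h2c : ((2 * nfCost B : ℕ) : ℝ) ≤ ((B.length + 2 : ℕ) : ℝ) := Nat.cast_le.mpr h2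
    push_cast at h2c
    linarith
  have hW : (s.map wt).sum ≤ 3 / 2 * OPT s := by
    rw [← sum_wt_range, ← hc]
    exact weight_le_cost s hs p hp
  have hsplit := map_filter_split s
  have hsm := small_map_wt s
  have hbm := big_map_wt s
  rw [← hB] at hsplit hbm
  rw [show s.filter (fun x => decide (x < 1 / 2)) = L from hL.symm] at hsplit hsm
  have hnf : nf2Cost s = nfCost L + nfCost B := rfl
  rw [hnf]
  push_cast
  linarith

end

end OOEBP
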